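/- arXiv:2603.21602 — 5 statements merged into one kernel-verified Lean document; each statement's English description precedes it below -/
import Mathlib

section
/- There is an absolute constant C > 0 with the following property. Let G ∈ L²(ℝ), let λ > 2, and suppose τ = (sup_{0<r<λ} (λ/r)·∫_{−r}^{r} |G(s)|² ds)^(1/2) + sup_{r>0} r^(−1/2)·∫_{−r}^{r} |G(s)| ds is finite. Then for all 0 ≤ r₁ < r₂ ≤ 2, the associated radial free wave v_L satisfies ‖χ_{Ω_{r₁,r₂}} W⁴·v_L‖_{L¹L²} ≤ C · τ · λ^(−1/2) · (r₂ − r₁)^(1/2). -/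
open MeasureTheory Real Set

noncomputable section

/-- The ground state `W(x) = (1/3 + |x|^2)^(-1/2)` on `ℝ³`. -/
def W3 (x : EuclideanSpace ℝ (Fin 3)) : ℝ := (1/3 + ‖x‖^2) ^ (-(1:ℝ)/2)

/-- The rescaled ground state `W_λ(x) = λ^(-1/2) W(x/λ)`. -/
def Wlam (lam : ℝ) (x : EuclideanSpace ℝ (Fin 3)) : ℝ := lam ^ (-(1:ℝ)/2) * W3 (lam⁻¹ • x)

/-- The Strichartz norm `‖χ_Ψ u‖_Y = (∫ (∫_{(x,t)∈Ψ} |u|^10 dx)^(1/2) dt)^(1/5)`. -/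
def Ynorm (Ψ : Set (EuclideanSpace ℝ (Fin 3) × ℝ))
    (u : EuclideanSpace ℝ (Fin 3) → ℝ → ℝ) : ℝ :=
  (∫ t : ℝ, (∫ x in {x | (x, t) ∈ Ψ}, |u x t| ^ 10) ^ ((1:ℝ)/2)) ^ ((1:ℝ)/5)

/-- The norm `‖χ_Ψ u‖_{L¹L²} = ∫ (∫_{(x,t)∈Ψ} |u|² dx)^(1/2) dt`. -/
def L1L2 (Ψ : Set (EuclideanSpace ℝ (Fin 3) × ℝ))
    (u : EuclideanSpace ℝ (Fin 3) → ℝ → ℝ) : ℝ :=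
  ∫ t : ℝ, (∫ x in {x | (x, t) ∈ Ψ}, (u x t) ^ 2) ^ ((1:ℝ)/2)

/-- The channel region `Ω_{r₁,r₂} = {(x,t) : |t| + r₁ < |x| < |t| + r₂}`. -/
def channel (r₁ r₂ : ℝ) : Set (EuclideanSpace ℝ (Fin 3) × ℝ) :=
  {p | |p.2| + r₁ < ‖p.1‖ ∧ ‖p.1‖ < |p.2| + r₂}

/-- The radial free wave with radiation profile `G` (in the negative time direction):
`v(x,t) = |x|⁻¹ ∫_{t-|x|}^{t+|x|} G(s) ds`. -/
def freeWave (G : ℝ → ℝ) (x : EuclideanSpace ℝ (Fin 3)) (t : ℝ) : ℝ :=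
  ‖x‖⁻¹ * ∫ s in (t - ‖x‖)..(t + ‖x‖), G s

/-- `‖G‖_{L²(E)} = (∫_E |G|²)^(1/2)`. -/
def L2on (G : ℝ → ℝ) (E : Set ℝ) : ℝ := (∫ s in E, (G s)^2) ^ ((1:ℝ)/2)

/-- The set whose supremum is `sup_{0<r<λ} (λ/r) ∫_{-r}^r |G(s)|² ds`. -/
def tauA (G : ℝ → ℝ) (lam : ℝ) : Set ℝ :=
  {A | ∃ r, 0 < r ∧ r < lam ∧ A = (lam / r) * ∫ s in (-r)..r, (G s)^2}

/-- The set whose supremum is `sup_{r>0} r^(-1/2) ∫_{-r}^r |G(s)| ds`. -/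
def tauB (G : ℝ → ℝ) : Set ℝ :=
  {B | ∃ r, 0 < r ∧ B = (∫ s in (-r)..r, |G s|) / Real.sqrt r}

/-- `τ = (sup_{0<r<λ} (λ/r)∫_{-r}^r |G|²)^(1/2) + sup_{r>0} r^(-1/2)∫_{-r}^r |G|`. -/
def tau (G : ℝ → ℝ) (lam : ℝ) : ℝ := Real.sqrt (sSup (tauA G lam)) + sSup (tauB G)

/-!
On the channel `|t| < |x|`, so `v_L(x,t)` is `|x|⁻¹` times an integral of `G` over a subinterval
of `[-r, r]` with `r = |t| + |x| ≤ 2|x|`. For `r < λ`, Cauchy–Schwarz and the first part of `τ`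
give `∫_{-r}^r |G| ≤ 2τ r λ^(-1/2)`; for `r ≥ λ` the second part of `τ` gives
`∫_{-r}^r |G| ≤ τ √r ≤ τ r λ^(-1/2)`. Hence `|v_L| ≤ 4τ λ^(-1/2)` on the channel.
At time `t` the channel is a spherical shell of radius about `|t|` and thickness `r₂ - r₁`,
of volume `O((r₂ - r₁)(1 + |t|)²)`, on which `W⁴ ≤ (1/3 + t²)⁻²`. So the `L²` norm at time `t`
is `O(τ λ^(-1/2) (r₂ - r₁)^(1/2) (1 + t²)⁻¹)`, which is integrable in `t`.
-/

lemma setIntegral_abs_le_sqrt_mul_sqrt {α : Type*} [MeasurableSpace α] {μ : Measure α}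
    {f : α → ℝ} (hf : MemLp f 2 μ) {s : Set α} (hs : μ s < ⊤) :
    ∫ x in s, |f x| ∂μ ≤ √(μ.real s) * √(∫ x in s, f x ^ 2 ∂μ) := by
  have : IsFiniteMeasure (μ.restrict s) := ⟨by simpa using hs⟩
  have h := integral_mul_le_Lp_mul_Lq_of_nonneg (μ := μ.restrict s) Real.HolderConjugate.two_two
    (f := fun x => |f x|) (g := fun _ => (1 : ℝ))
    (Filter.Eventually.of_forall fun _ => abs_nonneg _) (Filter.Eventually.of_forall fun _ => zero_le_one) (by simpa using (hf.restrict s).norm)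
    (memLp_const 1)
  simp only [mul_one, Real.one_rpow, integral_const, smul_eq_mul,
    measureReal_restrict_apply_univ] at h
  rw [mul_comm, Real.sqrt_eq_rpow, Real.sqrt_eq_rpow]
  convert h using 3
  simp [sq_abs]

lemma intervalIntegral_abs_le_sqrt_mul_sqrt {G : ℝ → ℝ} (hG : MemLp G 2 volume) {a b : ℝ}
    (hab : a ≤ b) :
    ∫ s in a..b, |G s| ≤ √(b - a) * √(∫ s in a..b, G s ^ 2) := by
  simpa [intervalIntegral.integral_of_le hab, hab] using
    setIntegral_abs_le_sqrt_mul_sqrt hG (measure_Ioc_lt_top (a := a) (b := b))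

section Tau

variable {G : ℝ → ℝ} {lam r : ℝ}

lemma sSup_tauB_nonneg (hB : BddAbove (tauB G)) : 0 ≤ sSup (tauB G) := by
  have : 0 ≤ ∫ s in (-1 : ℝ)..1, |G s| :=
    intervalIntegral.integral_nonneg (by norm_num) fun _ _ => abs_nonneg _
  exact le_csSup_of_le hB ⟨1, one_pos, rfl⟩ (by positivity)

lemma tau_nonneg (hB : BddAbove (tauB G)) : 0 ≤ tau G lam :=
  add_nonneg (Real.sqrt_nonneg _) (sSup_tauB_nonneg hB)

lemma intervalIntegral_abs_le_sSup_tauB_mul_sqrt (hB : BddAbove (tauB G)) (hr : 0 < r) :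
    ∫ s in (-r)..r, |G s| ≤ sSup (tauB G) * √r := by
  rw [← div_le_iff₀ (Real.sqrt_pos.2 hr)]
  exact le_csSup hB ⟨r, hr, rfl⟩

lemma intervalIntegral_sq_le_sSup_tauA (hA : BddAbove (tauA G lam)) (hr : 0 < r)
    (hrl : r < lam) : ∫ s in (-r)..r, G s ^ 2 ≤ sSup (tauA G lam) * r / lam := by
  have h := le_csSup hA ⟨r, hr, hrl, rfl⟩
  rw [le_div_iff₀ (hr.trans hrl)]
  rw [div_mul_eq_mul_div, div_le_iff₀ hr] at h
  linarith

lemma intervalIntegral_abs_le_sqrt_sSup_tauA (hG : MemLp G 2 volume) (hA : BddAbove (tauA G lam))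
    (hr : 0 < r) (hrl : r < lam) :
    ∫ s in (-r)..r, |G s| ≤ 2 * √(sSup (tauA G lam)) * r / √lam := by
  set A := sSup (tauA G lam)
  have hlam : 0 < lam := hr.trans hrl
  have hsq := intervalIntegral_sq_le_sSup_tauA hA hr hrl
  have hA0 : 0 ≤ A := by
    have : 0 ≤ ∫ s in (-r)..r, G s ^ 2 :=
      intervalIntegral.integral_nonneg (by linarith) fun _ _ => sq_nonneg _
    have : 0 ≤ A * r / lam := this.trans hsq
    rwa [mul_div_assoc, mul_nonneg_iff_of_pos_right (by positivity)] at this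
  calc ∫ s in (-r)..r, |G s| ≤ √(r - -r) * √(∫ s in (-r)..r, G s ^ 2) :=
        intervalIntegral_abs_le_sqrt_mul_sqrt hG (by linarith)
    _ ≤ √(2 * r) * √(A * r / lam) := by
        rw [show r - -r = 2 * r by ring]
        gcongr
    _ = √2 * (√A * r / √lam) := by
        rw [← Real.sqrt_mul (by positivity),
          show 2 * r * (A * r / lam) = 2 * (A * r ^ 2) / lam by ring, Real.sqrt_div' _ hlam.le,
          Real.sqrt_mul zero_le_two, Real.sqrt_mul hA0, Real.sqrt_sq hr.le]
        ring
    _ ≤ 2 * (√A * r / √lam) := by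
        gcongr
        rw [Real.sqrt_le_left zero_le_two]
        norm_num
    _ = 2 * √A * r / √lam := by ring

lemma intervalIntegral_abs_le_tau (hG : MemLp G 2 volume) (hlam : 0 < lam)
    (hA : BddAbove (tauA G lam)) (hB : BddAbove (tauB G)) (hr : 0 < r) :
    ∫ s in (-r)..r, |G s| ≤ 2 * tau G lam * r / √lam := by
  have hB0 := sSup_tauB_nonneg hB
  have hA0 : 0 ≤ √(sSup (tauA G lam)) := Real.sqrt_nonneg _
  rcases lt_or_ge r lam with hrl | hlr
  · refine (intervalIntegral_abs_le_sqrt_sSup_tauA hG hA hr hrl).trans ?_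
    unfold tau
    gcongr
    linarith
  · have hsqrt : √r * √lam ≤ r := by
      calc √r * √lam ≤ √r * √r := by gcongr
        _ = r := Real.mul_self_sqrt hr.le
    refine (intervalIntegral_abs_le_sSup_tauB_mul_sqrt hB hr).trans ?_
    rw [le_div_iff₀ (Real.sqrt_pos.2 hlam), mul_assoc]
    unfold tau
    nlinarith [mul_le_mul_of_nonneg_left hsqrt hB0, mul_nonneg hA0 hr.le]

end Tau

lemma abs_intervalIntegral_le_intervalIntegral_abs_symm {G : ℝ → ℝ} (hG : MemLp G 2 volume)
    {a b r : ℝ} (hab : a ≤ b) (ha : -r ≤ a) (hb : b ≤ r) :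
    |∫ s in a..b, G s| ≤ ∫ s in (-r)..r, |G s| := by
  have hint : IntervalIntegrable (fun s => |G s|) volume (-r) r := by
    constructor <;> exact ((hG.restrict _).integrable one_le_two).abs
  exact (intervalIntegral.abs_integral_le_integral_abs hab).trans
    (intervalIntegral.integral_mono_interval ha hab hb
      (Filter.Eventually.of_forall fun _ => abs_nonneg _) hint)

lemma abs_freeWave_le {G : ℝ → ℝ} {lam : ℝ} (hG : MemLp G 2 volume) (hlam : 0 < lam)
    (hA : BddAbove (tauA G lam)) (hB : BddAbove (tauB G)) {x : EuclideanSpace ℝ (Fin 3)} {t : ℝ}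
    (hx : |t| < ‖x‖) : |freeWave G x t| ≤ 4 * tau G lam / √lam := by
  set R := ‖x‖
  have hR : 0 < R := (abs_nonneg t).trans_lt hx
  have hint : |∫ s in (t - R)..(t + R), G s| ≤ ∫ s in (-(|t| + R))..(|t| + R), |G s| :=
    abs_intervalIntegral_le_intervalIntegral_abs_symm hG (by linarith)
      (by linarith [neg_abs_le t]) (by linarith [le_abs_self t])
  have hτ := tau_nonneg (lam := lam) hB
  calc |freeWave G x t| = R⁻¹ * |∫ s in (t - R)..(t + R), G s| := by
        rw [freeWave, abs_mul, abs_inv, abs_norm]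
    _ ≤ R⁻¹ * (2 * tau G lam * (|t| + R) / √lam) := by
        gcongr
        exact hint.trans (intervalIntegral_abs_le_tau hG hlam hA hB (by positivity))
    _ = 2 * tau G lam * ((|t| + R) / R) / √lam := by ring
    _ ≤ 2 * tau G lam * 2 / √lam := by
        gcongr
        rw [div_le_iff₀ hR]
        linarith
    _ = 4 * tau G lam / √lam := by ring

open Metric Module in
lemma addHaar_real_annulus_le {E : Type*} [NormedAddCommGroup E] [NormedSpace ℝ E]
    [MeasurableSpace E] [BorelSpace E] [FiniteDimensional ℝ E] [Nontrivial E] (μ : Measure E)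
    [μ.IsAddHaarMeasure] {a b : ℝ} (ha : 0 ≤ a) (hab : a ≤ b) :
    μ.real {x | a < ‖x‖ ∧ ‖x‖ < b}
      ≤ (b ^ finrank ℝ E - a ^ finrank ℝ E) * μ.real (ball 0 1) := by
  have hsub : {x : E | a < ‖x‖ ∧ ‖x‖ < b} ⊆ ball 0 b \ ball 0 a := fun x hx =>
    ⟨mem_ball_zero_iff.2 hx.2, fun h => (mem_ball_zero_iff.1 h).not_gt hx.1⟩
  have hball : ∀ r, 0 ≤ r → μ.real (ball (0 : E) r) = r ^ finrank ℝ E * μ.real (ball 0 1) :=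
    fun r hr => by
      rw [← Measure.addHaar_real_closedBall_eq_addHaar_real_ball,
        Measure.addHaar_real_closedBall μ _ hr]
  calc μ.real {x | a < ‖x‖ ∧ ‖x‖ < b} ≤ μ.real (ball 0 b \ ball 0 a) :=
        measureReal_mono hsub ((measure_mono sdiff_subset).trans_lt measure_ball_lt_top).ne
    _ = _ := by
      rw [measureReal_sdiff (ball_subset_ball hab) measurableSet_ball, hball b (ha.trans hab),
        hball a ha, sub_mul]

lemma pow_three_sub_pow_three_le {a b c : ℝ} (ha : 0 ≤ a) (hab : a ≤ b) (hbc : b ≤ c) :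
    b ^ 3 - a ^ 3 ≤ 3 * (b - a) * c ^ 2 := by
  have hsum : a ^ 2 + a * b + b ^ 2 ≤ 3 * c ^ 2 := by nlinarith
  calc b ^ 3 - a ^ 3 = (b - a) * (a ^ 2 + a * b + b ^ 2) := by ring
    _ ≤ (b - a) * (3 * c ^ 2) := by gcongr
    _ = 3 * (b - a) * c ^ 2 := by ring

lemma measureReal_channel_slice_le {r₁ r₂ : ℝ} (hr₁ : 0 ≤ r₁) (h12 : r₁ ≤ r₂) (hr₂ : r₂ ≤ 2)
    (t : ℝ) :
    volume.real {x : EuclideanSpace ℝ (Fin 3) | (x, t) ∈ channel r₁ r₂}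
      ≤ 3 * volume.real (Metric.ball (0 : EuclideanSpace ℝ (Fin 3)) 1) * (r₂ - r₁)
        * (|t| + 2) ^ 2 := by
  have h := addHaar_real_annulus_le (volume : Measure (EuclideanSpace ℝ (Fin 3)))
    (a := |t| + r₁) (b := |t| + r₂) (by positivity) (by linarith)
  rw [finrank_euclideanSpace_fin] at h
  have hcube := pow_three_sub_pow_three_le (a := |t| + r₁) (b := |t| + r₂) (c := |t| + 2)
    (by positivity) (by linarith) (by linarith)
  calc _ ≤ _ := h
    _ ≤ 3 * (|t| + r₂ - (|t| + r₁)) * (|t| + 2) ^ 2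
          * volume.real (Metric.ball (0 : EuclideanSpace ℝ (Fin 3)) 1) := by gcongr
    _ = _ := by ring

lemma W3_pow_four (x : EuclideanSpace ℝ (Fin 3)) : W3 x ^ 4 = ((1/3 + ‖x‖ ^ 2) ^ 2)⁻¹ := by
  rw [W3, ← Real.rpow_natCast, ← Real.rpow_mul (by positivity)]
  norm_num

lemma W3_pow_four_le {x : EuclideanSpace ℝ (Fin 3)} {t : ℝ} (hx : |t| ≤ ‖x‖) :
    W3 x ^ 4 ≤ ((1/3 + t ^ 2) ^ 2)⁻¹ := by
  rw [W3_pow_four, ← sq_abs t]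
  gcongr

lemma abs_add_two_div_sq_le (t : ℝ) : (|t| + 2) / (1/3 + t ^ 2) ^ 2 ≤ 36 / (1 + t ^ 2) := by
  rw [div_le_div_iff₀ (by positivity) (by positivity)]
  nlinarith [abs_nonneg t, sq_abs t, sq_nonneg (t ^ 2 - |t|), sq_nonneg (|t| - 1)]

section Slice

variable {u : EuclideanSpace ℝ (Fin 3) → ℝ → ℝ} {M r₁ r₂ t : ℝ}

local notation "m₃" => volume.real (Metric.ball (0 : EuclideanSpace ℝ (Fin 3)) 1)

lemma integral_channel_slice_le (hr₁ : 0 ≤ r₁) (h12 : r₁ ≤ r₂) (hr₂ : r₂ ≤ 2)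
    (hu : ∀ x, (x, t) ∈ channel r₁ r₂ → |u x t| ≤ M) :
    ∫ x in {x | (x, t) ∈ channel r₁ r₂}, (W3 x ^ 4 * u x t) ^ 2
      ≤ (M * ((|t| + 2) / (1/3 + t ^ 2) ^ 2)) ^ 2 * (3 * m₃ * (r₂ - r₁)) := by
  set S := {x : EuclideanSpace ℝ (Fin 3) | (x, t) ∈ channel r₁ r₂}
  have hS : volume S < ⊤ := by
    refine (measure_mono fun x (hx : (x, t) ∈ channel r₁ r₂) => ?_).trans_lt
      (measure_ball_lt_top (x := 0) (r := |t| + r₂))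
    exact mem_ball_zero_iff.2 hx.2
  have hpt : ∀ x ∈ S, ‖(W3 x ^ 4 * u x t) ^ 2‖ ≤ (M * ((1/3 + t ^ 2) ^ 2)⁻¹) ^ 2 := by
    intro x hx
    have hW := W3_pow_four_le (t := t) (x := x) (by linarith [hx.1])
    rw [Real.norm_of_nonneg (sq_nonneg _), ← sq_abs, abs_mul, abs_of_nonneg (by positivity)]
    refine pow_le_pow_left₀ (by positivity) ?_ 2
    calc W3 x ^ 4 * |u x t| ≤ ((1/3 + t ^ 2) ^ 2)⁻¹ * M :=
          mul_le_mul hW (hu x hx) (abs_nonneg _) (by positivity)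
      _ = _ := mul_comm _ _
  calc ∫ x in S, (W3 x ^ 4 * u x t) ^ 2
      ≤ ‖∫ x in S, (W3 x ^ 4 * u x t) ^ 2‖ := Real.le_norm_self _
    _ ≤ (M * ((1/3 + t ^ 2) ^ 2)⁻¹) ^ 2 * volume.real S :=
        norm_setIntegral_le_of_norm_le_const hS hpt
    _ ≤ (M * ((1/3 + t ^ 2) ^ 2)⁻¹) ^ 2 * (3 * m₃ * (r₂ - r₁) * (|t| + 2) ^ 2) := by
        gcongr
        exact measureReal_channel_slice_le hr₁ h12 hr₂ t
    _ = _ := by ring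

lemma sqrt_integral_channel_slice_le (hM : 0 ≤ M) (hr₁ : 0 ≤ r₁) (h12 : r₁ ≤ r₂) (hr₂ : r₂ ≤ 2)
    (hu : ∀ x, (x, t) ∈ channel r₁ r₂ → |u x t| ≤ M) :
    (∫ x in {x | (x, t) ∈ channel r₁ r₂}, (W3 x ^ 4 * u x t) ^ 2) ^ ((1:ℝ)/2)
      ≤ 36 * M * √(3 * m₃ * (r₂ - r₁)) / (1 + t ^ 2) := by
  have hm : 0 ≤ 3 * m₃ * (r₂ - r₁) := by
    have := measureReal_nonneg (μ := volume) (s := Metric.ball (0 : EuclideanSpace ℝ (Fin 3)) 1)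
    have : 0 ≤ r₂ - r₁ := by linarith
    positivity
  rw [← Real.sqrt_eq_rpow]
  calc _ ≤ √((M * ((|t| + 2) / (1/3 + t ^ 2) ^ 2)) ^ 2 * (3 * m₃ * (r₂ - r₁))) :=
        Real.sqrt_le_sqrt (integral_channel_slice_le hr₁ h12 hr₂ hu)
    _ = M * ((|t| + 2) / (1/3 + t ^ 2) ^ 2) * √(3 * m₃ * (r₂ - r₁)) := by
        rw [Real.sqrt_mul' _ hm, Real.sqrt_sq (by positivity)]
    _ ≤ M * (36 / (1 + t ^ 2)) * √(3 * m₃ * (r₂ - r₁)) := by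
        gcongr ?_ * _
        exact mul_le_mul_of_nonneg_left (abs_add_two_div_sq_le t) hM
    _ = _ := by ring

end Slice

theorem stmt12 :
    ∃ C : ℝ, 0 < C ∧ ∀ (G : ℝ → ℝ) (lam r₁ r₂ : ℝ),
      MemLp G 2 (volume : Measure ℝ) → 2 < lam →
      BddAbove (tauA G lam) → BddAbove (tauB G) →
      0 ≤ r₁ → r₁ < r₂ → r₂ ≤ 2 →
      L1L2 (channel r₁ r₂) (fun x t => (W3 x)^4 * freeWave G x t)
        ≤ C * tau G lam * lam ^ (-(1:ℝ)/2) * (r₂ - r₁) ^ ((1:ℝ)/2) := by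
  set m₃ := volume.real (Metric.ball (0 : EuclideanSpace ℝ (Fin 3)) 1)
  have hm₃ : 0 < m₃ :=
    ENNReal.toReal_pos (Metric.measure_ball_pos volume 0 one_pos).ne' measure_ball_lt_top.ne
  refine ⟨144 * π * √(3 * m₃), by positivity, ?_⟩
  intro G lam r₁ r₂ hG hlam hA hB hr₁ h12 hr₂
  have hlam₀ : 0 < lam := by linarith
  set M := 4 * tau G lam / √lam
  have hM : 0 ≤ M := by have := tau_nonneg (lam := lam) hB; positivity
  have hv : ∀ t x, (x, t) ∈ channel r₁ r₂ → |freeWave G x t| ≤ M := fun t x hx =>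
    abs_freeWave_le hG hlam₀ hA hB (by linarith [hx.1])
  calc L1L2 (channel r₁ r₂) (fun x t => (W3 x)^4 * freeWave G x t)
      ≤ ∫ t, 36 * M * √(3 * m₃ * (r₂ - r₁)) * (1 + t ^ 2)⁻¹ :=
        integral_mono_of_nonneg (Filter.Eventually.of_forall fun _ => by positivity)
          (integrable_inv_one_add_sq.const_mul _)
          (Filter.Eventually.of_forall fun t =>
            sqrt_integral_channel_slice_le hM hr₁ h12.le hr₂ (hv t))
    _ = 144 * π * √(3 * m₃) * tau G lam * (√lam)⁻¹ * √(r₂ - r₁) := by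
        rw [integral_const_mul, integral_univ_inv_one_add_sq, Real.sqrt_mul (by positivity)]
        ring
    _ = _ := by
        rw [← Real.sqrt_eq_rpow, neg_div, Real.rpow_neg hlam₀.le, ← Real.sqrt_eq_rpow]
end
end

section
/- Let G : ℝ → ℝ be continuous with ∫_ℝ G(s)² ds < ∞, and define u₀(r) = r^(−1) ∫_{−r}^{r} G(s) ds and u₁(r) = (G(r) − G(−r))/r for r > 0. Then for every R > 0 one has the exterior energy identity ∫_R^∞ ( u₀′(r)² + u₁(r)² ) r² dr = 2 ∫_{{s : |s| > R}} G(s)² ds + R · u₀(R)², where u₀′ denotes the derivative of u₀. -/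
open MeasureTheory Real Set

noncomputable section

open Filter Topology intervalIntegral

/-!
Write `F r = ∫_{-r}^r G`, so that `u₀ = F / r` and `F' r = G r + G (-r)`. The function
`Φ r = 2 ∫_{-r}^r G² - F(r)² / r` has derivative `(u₀'² + u₁²) r²` for `r ≠ 0`: this is
the parallelogram law `(G r + G (-r))² + (G r - G (-r))² = 2 G(r)² + 2 G(-r)²`. The integrand being
nonnegative, its integral over `(R, ∞)` is `lim Φ - Φ R`, and the limit is `2 ∫ G²` because
`F(r)² / r → 0`: splitting `[-r, r]` at `±√r`, Cauchy–Schwarz bounds `F(r)² / r` by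
`4 ‖G‖₂² / √r` plus four times the `L²` mass of `G` outside `[-√r, √r]`.
-/

theorem sq_intervalIntegral_le {f : ℝ → ℝ} {a b : ℝ} (hab : a ≤ b)
    (hf : IntervalIntegrable f volume a b)
    (hf2 : IntervalIntegrable (fun x => f x ^ 2) volume a b) :
    (∫ x in a..b, f x) ^ 2 ≤ (b - a) * ∫ x in a..b, f x ^ 2 := by
  rcases hab.eq_or_lt with rfl | hlt
  · simp
  have : IsFiniteMeasure (volume.restrict (uIoc a b)) := by
    rw [uIoc_of_le hab]; infer_instance
  have : NeZero (volume.restrict (uIoc a b)) :=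
    ⟨by simpa [Measure.restrict_eq_zero, uIoc_of_le hab] using hlt⟩
  have jensen : (⨍ x in a..b, f x) ^ 2 ≤ ⨍ x in a..b, f x ^ 2 :=
    even_two.convexOn_pow.map_average_le (continuous_pow 2).continuousOn isClosed_univ
      (by simp) ((uIoc_of_le hab) ▸ hf.1) ((uIoc_of_le hab) ▸ hf2.1)
  rwa [interval_average_eq_div, interval_average_eq_div, div_pow, sq (b - a), ← div_div,
    div_le_div_iff_of_pos_right (sub_pos.2 hlt), div_le_iff₀' (sub_pos.2 hlt)] at jensen

section SymmetricIntegrals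

variable {f : ℝ → ℝ}

theorem sq_intervalIntegral_neg_self_le (hf : LocallyIntegrable f)
    (hf2 : Integrable fun x => f x ^ 2) {s r : ℝ} (hs : 0 ≤ s) (hsr : s ≤ r) :
    (∫ x in -r..r, f x) ^ 2
      ≤ 4 * s * (∫ x, f x ^ 2) + 4 * r * ((∫ x, f x ^ 2) - ∫ x in -s..s, f x ^ 2) := by
  have hfi (a b : ℝ) : IntervalIntegrable f volume a b :=
    (hf.integrableOn_isCompact isCompact_uIcc).intervalIntegrable
  have hf2i (a b : ℝ) : IntervalIntegrable (fun x => f x ^ 2) volume a b :=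
    hf2.intervalIntegrable
  have hsplit (g : ℝ → ℝ) (hg : ∀ a b, IntervalIntegrable g volume a b) :
      ∫ x in -r..r, g x = (∫ x in -r..-s, g x) + (∫ x in -s..s, g x) + ∫ x in s..r, g x := by
    rw [integral_add_adjacent_intervals (hg _ _) (hg _ _),
      integral_add_adjacent_intervals (hg _ _) (hg _ _)]
  have hleft := sq_intervalIntegral_le (neg_le_neg hsr) (hfi _ _) (hf2i _ _)
  have hmid := sq_intervalIntegral_le (neg_le_self hs) (hfi _ _) (hf2i _ _)
  have hright := sq_intervalIntegral_le hsr (hfi _ _) (hf2i _ _)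
  have htotal : ∫ x in -r..r, f x ^ 2 ≤ ∫ x, f x ^ 2 := by
    rw [integral_of_le (by linarith)]
    exact setIntegral_le_integral hf2 (.of_forall fun x => sq_nonneg (f x))
  have hleft_nonneg : 0 ≤ ∫ x in -r..-s, f x ^ 2 :=
    integral_nonneg (neg_le_neg hsr) fun x _ => sq_nonneg (f x)
  have hright_nonneg : 0 ≤ ∫ x in s..r, f x ^ 2 :=
    integral_nonneg hsr fun x _ => sq_nonneg (f x)
  rw [hsplit f hfi]
  rw [hsplit _ hf2i] at htotal
  -- `(a + b + c)² ≤ 2 b² + 4 a² + 4 c²`, with `b` the integral over `[-s, s]`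
  nlinarith [sq_nonneg ((∫ x in -r..-s, f x) + (∫ x in s..r, f x) - ∫ x in -s..s, f x),
    sq_nonneg ((∫ x in -r..-s, f x) - (∫ x in s..r, f x))]

theorem tendsto_sq_intervalIntegral_neg_self_div_atTop (hf : LocallyIntegrable f)
    (hf2 : Integrable fun x => f x ^ 2) :
    Tendsto (fun r => (∫ x in -r..r, f x) ^ 2 / r) atTop (𝓝 0) := by
  have hbound : ∀ᶠ r in atTop, (∫ x in -r..r, f x) ^ 2 / r
      ≤ 4 * (∫ x, f x ^ 2) / √r + 4 * ((∫ x, f x ^ 2) - ∫ x in -√r..√r, f x ^ 2) := by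
    filter_upwards [eventually_ge_atTop 1] with r hr
    rw [div_le_iff₀ (by linarith)]
    calc _ ≤ _ :=
          sq_intervalIntegral_neg_self_le hf hf2 (sqrt_nonneg r) (sqrt_le_self_iff.2 (.inr hr))
      _ = _ := by
        field_simp
        linear_combination (∫ x, f x ^ 2) * mul_self_sqrt (zero_le_one.trans hr)
  have hlim : Tendsto (fun r => 4 * (∫ x, f x ^ 2) / √r
      + 4 * ((∫ x, f x ^ 2) - ∫ x in -√r..√r, f x ^ 2)) atTop (𝓝 0) := by
    have htail : Tendsto (fun r => ∫ x in -√r..√r, f x ^ 2) atTop (𝓝 (∫ x, f x ^ 2)) :=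
      (intervalIntegral_tendsto_integral hf2 tendsto_neg_atTop_atBot tendsto_id).comp
      tendsto_sqrt_atTop
    have h := ((tendsto_const_nhds (x := 4 * ∫ x, f x ^ 2)).div_atTop tendsto_sqrt_atTop).add
      (((tendsto_const_nhds (x := ∫ x, f x ^ 2)).sub htail).const_mul 4)
    rwa [sub_self, mul_zero, add_zero] at h
  refine tendsto_of_tendsto_of_tendsto_of_le_of_le' tendsto_const_nhds hlim ?_ hbound
  filter_upwards [eventually_gt_atTop 0] with r hr using by positivity

end SymmetricIntegrals

theorem hasDerivAt_intervalIntegral_neg_self {E : Type*} [NormedAddCommGroup E] [NormedSpace ℝ E]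
    [CompleteSpace E] {f : ℝ → E} (hf : Continuous f) (r : ℝ) :
    HasDerivAt (fun ρ => ∫ x in -ρ..ρ, f x) (f r + f (-r)) r := by
  have hprim (a : ℝ) : HasDerivAt (fun u => ∫ x in (0 : ℝ)..u, f x) (f a) a :=
    (hf.integral_hasStrictDerivAt 0 a).hasDerivAt
  have hneg : HasDerivAt (fun ρ => ∫ x in (0 : ℝ)..-ρ, f x) (-f (-r)) r := by
    simpa [Function.comp_def] using (hprim (-r)).scomp r (hasDerivAt_neg r)
  convert (hprim r).sub hneg using 1
  · ext ρ
    exact (integral_interval_sub_left (hf.intervalIntegrable 0 ρ)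
      (hf.intervalIntegrable 0 (-ρ))).symm
  · abel

def radialEnergyPrimitive (G : ℝ → ℝ) (r : ℝ) : ℝ :=
  2 * (∫ s in (-r)..r, (G s) ^ 2) - (∫ s in (-r)..r, G s) ^ 2 / r

theorem hasDerivAt_radialEnergyPrimitive {G : ℝ → ℝ} (hG : Continuous G) {r : ℝ} (hr : r ≠ 0) :
    HasDerivAt (radialEnergyPrimitive G)
      (((deriv (fun ρ : ℝ => (∫ s in (-ρ)..ρ, G s) / ρ) r) ^ 2 + ((G r - G (-r)) / r) ^ 2) * r ^ 2)
      r := by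
  have hF := hasDerivAt_intervalIntegral_neg_self hG r
  have hF2 := hasDerivAt_intervalIntegral_neg_self (f := fun s => G s ^ 2) (hG.pow 2) r
  have hu : HasDerivAt (fun ρ => (∫ s in (-ρ)..ρ, G s) / ρ)
      (((G r + G (-r)) * r - (∫ s in (-r)..r, G s)) / r ^ 2) r := by
    simpa using hF.fun_div (hasDerivAt_id' r) hr
  rw [hu.deriv]
  refine ((hF2.const_mul 2).fun_sub
    ((hF.fun_pow 2).fun_div (hasDerivAt_id' r) hr)).congr_deriv ?_
  field_simp
  ring

theorem setIntegral_lt_abs_eq_integral_sub {E : Type*} [NormedAddCommGroup E] [NormedSpace ℝ E]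
    {f : ℝ → E} (hf : Integrable f) {R : ℝ} (hR : 0 ≤ R) :
    ∫ s in {s : ℝ | R < |s|}, f s = (∫ s, f s) - ∫ s in -R..R, f s := by
  have hcompl : {s : ℝ | R < |s|} = (Icc (-R) R)ᶜ := by
    ext s
    simp only [mem_ofPred_eq, mem_compl_iff, mem_Icc, lt_abs, not_and_or, not_le]
    grind
  rw [hcompl, ← integral_add_compl measurableSet_Icc hf, integral_of_le (by linarith),
    integral_Icc_eq_integral_Ioc, add_sub_cancel_left]

theorem tendsto_radialEnergyPrimitive_atTop {G : ℝ → ℝ} (hG : LocallyIntegrable G)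
    (hG2 : Integrable fun s => (G s) ^ 2) :
    Tendsto (radialEnergyPrimitive G) atTop (𝓝 (2 * ∫ s, (G s) ^ 2)) := by
  have hmass :
      Tendsto (fun r => 2 * ∫ s in (-r)..r, (G s) ^ 2) atTop (𝓝 (2 * ∫ s, (G s) ^ 2)) :=
    (intervalIntegral_tendsto_integral hG2 tendsto_neg_atTop_atBot tendsto_id).const_mul 2
  have h := hmass.sub (tendsto_sq_intervalIntegral_neg_self_div_atTop hG hG2)
  rwa [sub_zero] at h

theorem stmt15 (G : ℝ → ℝ) (hG : Continuous G)
    (hG2 : Integrable (fun s => (G s)^2)) (R : ℝ) (hR : 0 < R) :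
    (∫ r in Set.Ioi R,
        ((deriv (fun ρ : ℝ => (∫ s in (-ρ)..ρ, G s) / ρ) r)^2 + ((G r - G (-r)) / r)^2) * r^2)
      = 2 * (∫ s in {s : ℝ | R < |s|}, (G s)^2)
        + R * ((∫ s in (-R)..R, G s) / R)^2 := by
  rw [integral_Ioi_of_hasDerivAt_of_nonneg'
      (fun r hr => hasDerivAt_radialEnergyPrimitive hG (hR.trans_le hr).ne')
      (fun r _ => by positivity) (tendsto_radialEnergyPrimitive_atTop hG.locallyIntegrable hG2),
    setIntegral_lt_abs_eq_integral_sub hG2 hR.le, radialEnergyPrimitive]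
  field_simp
  ring
end
end

section
/- There exist constants c₅ > 1, r₄ ∈ (0,1), C > 0 and a real number μ₀ ≠ 0 such that for every c > c₅ there exists a twice continuously differentiable function w : (0,∞) → ℝ satisfying: (i) w″(r) = −5·(1/3 + r²)^(−2)·(w(r) + r) for all r > 0; (ii) w(c) = 0; (iii) 1/2 ≤ w(r)/μ₀ ≤ 3/2 for all r ∈ (0, r₄); (iv) |w(r)| ≤ C for all r > 0 (with C independent of c); (v) for every r > 0, ∫_r^∞ (d/dρ (w(ρ)/ρ))² ρ² dρ < ∞. -/
open MeasureTheory Real Set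

noncomputable section

/-! The equation is linear and explicitly solvable. `w = -r` (that is, `φ = -1`) is a
particular solution, and the homogeneous equation `u'' = -45 u / (1 + 3r²)²` has the solutions
`regularSol = (r - 3r³) / (1 + 3r²)^(3/2)` (proportional to `r ΛW`, from the scaling
symmetry) and `singularSol = (9r⁴ - 18r² + 1) / (1 + 3r²)^(3/2)`. Since
`singularSol r / √3 = r + O(1)`, every `w = A · regularSol + singularSol / √3 - r` is bounded,
and so is `r² (w / r)' = r w' - w`, which gives the exterior energy bound. The condition
`w c = 0` fixes `A`, which stays bounded as `c → ∞` because `regularSol c → -1/√3`; hence all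
bounds are uniform in `c`, and `w 0 = 1/√3`. -/

def bracket (r : ℝ) : ℝ := √(1 + 3 * r ^ 2)

lemma bracket_sq (r : ℝ) : bracket r ^ 2 = 1 + 3 * r ^ 2 :=
  Real.sq_sqrt (by positivity)

lemma one_le_bracket (r : ℝ) : 1 ≤ bracket r :=
  Real.one_le_sqrt.mpr (by nlinarith)

lemma bracket_pos (r : ℝ) : 0 < bracket r := one_pos.trans_le (one_le_bracket r)

lemma sqrt_three_mul_le_bracket (r : ℝ) : √3 * r ≤ bracket r := by
  refine Real.le_sqrt_of_sq_le ?_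
  rw [mul_pow, Real.sq_sqrt zero_le_three]; linarith

lemma pow_le_bracket_pow {r : ℝ} (hr : 0 ≤ r) {k m : ℕ} (hkm : k ≤ m) :
    r ^ k ≤ bracket r ^ m := by
  have hle : r ≤ bracket r := by nlinarith [bracket_sq r, bracket_pos r]
  exact (pow_le_pow_left₀ hr hle k).trans (pow_le_pow_right₀ (one_le_bracket r) hkm)

lemma hasDerivAt_bracket (r : ℝ) : HasDerivAt bracket (3 * r / bracket r) r := by
  have h := (((hasDerivAt_pow 2 r).const_mul 3).const_add 1).sqrt (by positivity)
  refine h.congr_deriv ?_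
  simp only [bracket]; field_simp; push_cast; ring

lemma contDiff_bracket {n : WithTop ℕ∞} : ContDiff ℝ n bracket :=
  (contDiff_const.add (contDiff_const.mul (contDiff_id.pow 2))).sqrt fun r => by positivity

lemma hasDerivAt_bracket_pow (n : ℕ) (r : ℝ) :
    HasDerivAt (fun x => bracket x ^ n) (3 * n * r * bracket r ^ n / bracket r ^ 2) r := by
  rcases n with _ | n
  · simpa using hasDerivAt_const r (1 : ℝ)
  · refine ((hasDerivAt_bracket r).pow (n + 1)).congr_deriv ?_
    have := (bracket_pos r).ne'
    rw [Nat.add_sub_cancel]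
    field_simp
    ring

lemma hasDerivAt_div_bracket_pow {P : ℝ → ℝ} {P' r : ℝ} (hP : HasDerivAt P P' r) (n : ℕ) :
    HasDerivAt (fun x => P x / bracket x ^ n)
      ((P' * (1 + 3 * r ^ 2) - 3 * n * r * P r) / bracket r ^ (n + 2)) r := by
  refine (hP.div (hasDerivAt_bracket_pow n r) (pow_ne_zero n (bracket_pos r).ne')).congr_deriv ?_
  rw [← bracket_sq]
  have := (bracket_pos r).ne'
  field_simp
  ring

lemma five_mul_rpow_neg_two_eq (r : ℝ) :
    5 * (1 / 3 + r ^ 2) ^ (-(2 : ℝ)) = 45 / bracket r ^ 4 := by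
  rw [Real.rpow_neg (by positivity), show (2 : ℝ) = (2 : ℕ) by norm_num, Real.rpow_natCast,
    show bracket r ^ 4 = (bracket r ^ 2) ^ 2 by ring, bracket_sq]
  field_simp
  ring

def regularSol (r : ℝ) : ℝ := (r - 3 * r ^ 3) / bracket r ^ 3

def singularSol (r : ℝ) : ℝ := (9 * r ^ 4 - 18 * r ^ 2 + 1) / bracket r ^ 3

lemma hasDerivAt_regularSol (r : ℝ) :
    HasDerivAt regularSol ((1 - 15 * r ^ 2) / bracket r ^ 5) r := by
  have hP : HasDerivAt (fun x : ℝ => x - 3 * x ^ 3) (1 - 9 * r ^ 2) r :=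
    ((hasDerivAt_id' r).sub ((hasDerivAt_pow 3 r).const_mul 3)).congr_deriv (by ring)
  exact (hasDerivAt_div_bracket_pow hP 3).congr_deriv (by push_cast; ring)

lemma hasDerivAt_deriv_regularSol (r : ℝ) :
    HasDerivAt (deriv regularSol) (-(45 / bracket r ^ 4 * regularSol r)) r := by
  have hP : HasDerivAt (fun x : ℝ => 1 - 15 * x ^ 2) (-(30 * r)) r :=
    ((hasDerivAt_pow 2 r).const_mul 15).const_sub 1 |>.congr_deriv (by ring)
  rw [funext fun x => (hasDerivAt_regularSol x).deriv]
  refine (hasDerivAt_div_bracket_pow hP 5).congr_deriv ?_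
  have := (bracket_pos r).ne'
  simp only [regularSol]
  field_simp
  push_cast
  ring

lemma hasDerivAt_singularSol (r : ℝ) :
    HasDerivAt singularSol ((27 * r ^ 5 + 90 * r ^ 3 - 45 * r) / bracket r ^ 5) r := by
  have hP : HasDerivAt (fun x : ℝ => 9 * x ^ 4 - 18 * x ^ 2 + 1) (36 * r ^ 3 - 36 * r) r :=
    (((hasDerivAt_pow 4 r).const_mul 9).sub ((hasDerivAt_pow 2 r).const_mul 18)).add_const 1
      |>.congr_deriv (by ring)
  exact (hasDerivAt_div_bracket_pow hP 3).congr_deriv (by push_cast; ring)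

lemma hasDerivAt_deriv_singularSol (r : ℝ) :
    HasDerivAt (deriv singularSol) (-(45 / bracket r ^ 4 * singularSol r)) r := by
  have hP : HasDerivAt (fun x : ℝ => 27 * x ^ 5 + 90 * x ^ 3 - 45 * x)
      (135 * r ^ 4 + 270 * r ^ 2 - 45) r :=
    (((hasDerivAt_pow 5 r).const_mul 27).add ((hasDerivAt_pow 3 r).const_mul 90)).sub
      ((hasDerivAt_id' r).const_mul 45) |>.congr_deriv (by ring)
  rw [funext fun x => (hasDerivAt_singularSol x).deriv]
  refine (hasDerivAt_div_bracket_pow hP 5).congr_deriv ?_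
  have := (bracket_pos r).ne'
  simp only [singularSol]
  field_simp
  push_cast
  ring

lemma abs_div_bracket_pow_le {x K r : ℝ} {m : ℕ} (h : |x| ≤ K * bracket r ^ m) :
    |x / bracket r ^ m| ≤ K := by
  have := pow_pos (bracket_pos r) m
  rwa [abs_div, abs_of_pos this, div_le_iff₀ this]

lemma abs_regularSol_le {r : ℝ} (hr : 0 ≤ r) : |regularSol r| ≤ 4 := by
  refine abs_div_bracket_pow_le (abs_le.mpr ⟨?_, ?_⟩) <;>
    nlinarith [pow_le_bracket_pow hr (show 1 ≤ 3 by norm_num), pow_le_bracket_pow hr (le_refl 3),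
      pow_nonneg hr 3]

lemma regularSol_le_of_two_le {c : ℝ} (hc : 2 ≤ c) : regularSol c ≤ -1 / 4 := by
  have hS : bracket c ≤ 2 * c := by nlinarith [bracket_sq c, bracket_pos c]
  have hS3 : bracket c ^ 3 ≤ (2 * c) ^ 3 := pow_le_pow_left₀ (bracket_pos c).le hS 3
  have hc3 : c ≤ c ^ 3 := by nlinarith [mul_le_mul hc hc (by norm_num) (by linarith)]
  rw [regularSol, div_le_iff₀ (pow_pos (bracket_pos c) 3)]
  linarith

lemma cube_sub_cube_le_add {a s : ℝ} (ha : 0 ≤ a) (hs : 0 ≤ s) (h : s ^ 2 = a ^ 2 + 1) :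
    0 ≤ s ^ 3 - a ^ 3 ∧ s ^ 3 - a ^ 3 ≤ s + a := by
  have has : a ≤ s := by nlinarith
  have hprod : (s - a) * (s + a) = 1 := by linear_combination h
  constructor
  · nlinarith [pow_le_pow_left₀ ha has 3]
  · nlinarith [mul_nonneg (sub_nonneg.mpr has) (mul_nonneg ha hs)]

lemma abs_singularSol_div_sqrt_three_sub_le {r : ℝ} (hr : 0 ≤ r) :
    |singularSol r / √3 - r| ≤ 21 := by
  have h3 : √3 ^ 2 = 3 := Real.sq_sqrt zero_le_three
  have hS := bracket_pos r
  have hSa : bracket r ^ 2 = (√3 * r) ^ 2 + 1 := by rw [bracket_sq, mul_pow, h3]; ring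
  obtain ⟨hgap₀, hgap₁⟩ := cube_sub_cube_le_add (by positivity) hS.le hSa
  have hnum : singularSol r / √3 - r = (-(r * (bracket r ^ 3 - (√3 * r) ^ 3))
      + (1 - 18 * r ^ 2) / √3) / bracket r ^ 3 := by
    rw [singularSol]
    field_simp
    linear_combination (-(r ^ 4 * (√3 ^ 2 + 3))) * h3
  have hquad : |(1 - 18 * r ^ 2) / √3| ≤ 1 + 18 * r ^ 2 := by
    have h1 : 1 ≤ √3 := Real.one_le_sqrt.mpr (by norm_num)
    rw [abs_div, abs_of_pos (by positivity : (0 : ℝ) < √3), div_le_iff₀ (by positivity)]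
    have : |1 - 18 * r ^ 2| ≤ 1 + 18 * r ^ 2 := abs_le.mpr ⟨by nlinarith, by nlinarith⟩
    nlinarith
  have hrS : r ≤ bracket r := by simpa using pow_le_bracket_pow hr (le_refl 1)
  rw [hnum]
  refine abs_div_bracket_pow_le ((abs_add_le _ _).trans ?_)
  rw [abs_neg, abs_of_nonneg (mul_nonneg hr hgap₀)]
  nlinarith [pow_le_bracket_pow hr (show 2 ≤ 3 by norm_num), one_le_bracket r,
    pow_le_bracket_pow hr (show 0 ≤ 3 by norm_num), mul_le_mul hrS hgap₁ (by positivity) hS.le,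
    sqrt_three_mul_le_bracket r]

lemma abs_deriv_regularSol_mul_sub_le {r : ℝ} (hr : 0 ≤ r) :
    |deriv regularSol r * r - regularSol r| ≤ 24 := by
  have h : deriv regularSol r * r - regularSol r = (9 * r ^ 5 - 15 * r ^ 3) / bracket r ^ 5 := by
    rw [(hasDerivAt_regularSol r).deriv, regularSol]
    have := (bracket_pos r).ne'
    field_simp
    linear_combination (3 * r ^ 3 - r) * bracket_sq r
  rw [h]
  refine abs_div_bracket_pow_le (abs_le.mpr ⟨?_, ?_⟩) <;>
    nlinarith [pow_le_bracket_pow hr (show 3 ≤ 5 by norm_num), pow_le_bracket_pow hr (le_refl 5),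
      pow_nonneg hr 3, pow_nonneg hr 5]

lemma abs_deriv_singularSol_mul_sub_le {r : ℝ} (hr : 0 ≤ r) :
    |deriv singularSol r * r - singularSol r| ≤ 166 := by
  have h : deriv singularSol r * r - singularSol r
      = (135 * r ^ 4 - 30 * r ^ 2 - 1) / bracket r ^ 5 := by
    rw [(hasDerivAt_singularSol r).deriv, singularSol]
    have := (bracket_pos r).ne'
    field_simp
    linear_combination (18 * r ^ 2 - 9 * r ^ 4 - 1) * bracket_sq r
  rw [h]
  refine abs_div_bracket_pow_le (abs_le.mpr ⟨?_, ?_⟩) <;>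
    nlinarith [pow_le_bracket_pow hr (show 4 ≤ 5 by norm_num),
      pow_le_bracket_pow hr (show 2 ≤ 5 by norm_num),
      pow_le_bracket_pow hr (show 0 ≤ 5 by norm_num), pow_nonneg hr 4, pow_nonneg hr 2]

def radialSol (A r : ℝ) : ℝ := A * regularSol r + singularSol r / √3 - r

lemma hasDerivAt_radialSol (A r : ℝ) :
    HasDerivAt (radialSol A) (A * deriv regularSol r + deriv singularSol r / √3 - 1) r :=
  ((((hasDerivAt_regularSol r).differentiableAt.hasDerivAt.const_mul A).add
    ((hasDerivAt_singularSol r).differentiableAt.hasDerivAt.div_const √3)).sub (hasDerivAt_id' r))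

lemma deriv_deriv_radialSol (A r : ℝ) :
    deriv (deriv (radialSol A)) r = -(45 / bracket r ^ 4 * (radialSol A r + r)) := by
  rw [funext fun x => (hasDerivAt_radialSol A x).deriv]
  refine (((hasDerivAt_deriv_regularSol r).const_mul A).add
    ((hasDerivAt_deriv_singularSol r).div_const √3)).sub_const 1 |>.deriv.trans ?_
  rw [radialSol]
  ring

lemma contDiff_radialSol (A : ℝ) : ContDiff ℝ 2 (radialSol A) := by
  have hden : ∀ x, bracket x ^ 3 ≠ 0 := fun x => pow_ne_zero 3 (bracket_pos x).ne'
  have hreg : ContDiff ℝ 2 regularSol :=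
    (by fun_prop : ContDiff ℝ 2 fun x : ℝ => x - 3 * x ^ 3).div (contDiff_bracket.pow 3) hden
  have hsing : ContDiff ℝ 2 singularSol :=
    (by fun_prop : ContDiff ℝ 2 fun x : ℝ => 9 * x ^ 4 - 18 * x ^ 2 + 1).div
      (contDiff_bracket.pow 3) hden
  exact ((contDiff_const.mul hreg).add (hsing.div_const _)).sub contDiff_id

lemma abs_radialSol_le {A M r : ℝ} (hA : |A| ≤ M) (hr : 0 ≤ r) :
    |radialSol A r| ≤ 4 * M + 21 := by
  have h := abs_add_le (A * regularSol r) (singularSol r / √3 - r)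
  rw [abs_mul] at h
  rw [radialSol, add_sub_assoc]
  nlinarith [abs_regularSol_le hr, abs_singularSol_div_sqrt_three_sub_le hr, abs_nonneg A,
    abs_nonneg (regularSol r)]

lemma abs_deriv_radialSol_mul_sub_le {A r : ℝ} (hr : 0 ≤ r) :
    |deriv (radialSol A) r * r - radialSol A r| ≤ 24 * |A| + 166 := by
  have h : deriv (radialSol A) r * r - radialSol A r =
      A * (deriv regularSol r * r - regularSol r)
        + (deriv singularSol r * r - singularSol r) / √3 := by
    rw [(hasDerivAt_radialSol A r).deriv, radialSol]; ring
  have h1 : 1 ≤ √3 := Real.one_le_sqrt.mpr (by norm_num)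
  have hsing : |(deriv singularSol r * r - singularSol r) / √3| ≤ 166 := by
    rw [abs_div, abs_of_pos (show (0 : ℝ) < √3 by positivity), div_le_iff₀ (by positivity)]
    nlinarith [abs_deriv_singularSol_mul_sub_le hr]
  rw [h]
  refine (abs_add_le _ _).trans ?_
  rw [abs_mul]
  nlinarith [abs_deriv_regularSol_mul_sub_le hr, abs_nonneg A]

lemma integrableOn_sq_deriv_div_id_mul_sq {f : ℝ → ℝ} {r B : ℝ} (hr : 0 < r)
    (hf : ∀ ρ ∈ Ioi r, DifferentiableAt ℝ f ρ) (hB : ∀ ρ ∈ Ioi r, |deriv f ρ * ρ - f ρ| ≤ B) :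
    IntegrableOn (fun ρ => (deriv (fun σ => f σ / σ) ρ) ^ 2 * ρ ^ 2) (Ioi r) := by
  refine ((integrableOn_Ioi_rpow_of_lt (by norm_num : (-2 : ℝ) < -1) hr).const_mul (B ^ 2)).mono'
    (((measurable_deriv _).pow_const 2).mul (measurable_id.pow_const 2)).aestronglyMeasurable ?_
  filter_upwards [ae_restrict_mem measurableSet_Ioi] with ρ hρ
  have hρ0 : 0 < ρ := hr.trans hρ
  have hsq : (deriv f ρ * ρ - f ρ) ^ 2 ≤ B ^ 2 := by
    simpa only [sq_abs] using pow_le_pow_left₀ (abs_nonneg _) (hB ρ hρ) 2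
  have hd : HasDerivAt (fun σ => f σ / σ) ((deriv f ρ * ρ - f ρ * 1) / ρ ^ 2) ρ :=
    (hf ρ hρ).hasDerivAt.div (hasDerivAt_id' ρ) hρ0.ne'
  rw [hd.deriv, Real.norm_eq_abs, abs_of_nonneg (by positivity), Real.rpow_neg hρ0.le,
    Real.rpow_two]
  calc ((deriv f ρ * ρ - f ρ * 1) / ρ ^ 2) ^ 2 * ρ ^ 2
      = (deriv f ρ * ρ - f ρ) ^ 2 / ρ ^ 2 := by field_simp
    _ ≤ B ^ 2 / ρ ^ 2 := by gcongr
    _ = B ^ 2 * (ρ ^ 2)⁻¹ := div_eq_mul_inv _ _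

lemma exists_abs_sqrt_three_mul_radialSol_sub_one_lt (M : ℝ) {ε : ℝ} (hε : 0 < ε) :
    ∃ δ > 0, ∀ A r, |A| ≤ M → |r| < δ → |√3 * radialSol A r - 1| < ε := by
  have hreg : Continuous regularSol :=
    continuous_iff_continuousAt.2 fun r => (hasDerivAt_regularSol r).continuousAt
  have hsing : Continuous singularSol :=
    continuous_iff_continuousAt.2 fun r => (hasDerivAt_singularSol r).continuousAt
  set g : ℝ → ℝ := fun r => √3 * (M * |regularSol r| + |r|) + |singularSol r - 1|
  have hg : Continuous g := by fun_prop
  have hg0 : g 0 = 0 := by simp [g, regularSol, singularSol, bracket]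
  obtain ⟨δ, hδ, hgδ⟩ := Metric.continuousAt_iff.1 hg.continuousAt ε hε
  refine ⟨δ, hδ, fun A r hA hr => ?_⟩
  have hgr : g r < ε := by
    have h := hgδ (x := r) (by rwa [Real.dist_eq, sub_zero])
    rw [hg0, Real.dist_eq, sub_zero] at h
    exact (le_abs_self _).trans_lt h
  have hsplit : √3 * radialSol A r - 1 = √3 * (A * regularSol r - r) + (singularSol r - 1) := by
    rw [radialSol]; field_simp; ring
  rw [hsplit]
  refine (abs_add_le _ _).trans_lt (lt_of_le_of_lt ?_ hgr)
  rw [abs_mul, abs_of_pos (by positivity : (0 : ℝ) < √3)]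
  show _ ≤ √3 * (M * |regularSol r| + |r|) + |singularSol r - 1|
  gcongr
  refine (abs_sub _ _).trans ?_
  rw [abs_mul]
  gcongr

def shootCoeff (c : ℝ) : ℝ := (c - singularSol c / √3) / regularSol c

lemma radialSol_shootCoeff_self {c : ℝ} (hc : regularSol c ≠ 0) :
    radialSol (shootCoeff c) c = 0 := by
  rw [radialSol, shootCoeff]
  field_simp
  ring

lemma abs_shootCoeff_le {c : ℝ} (hc : 2 ≤ c) : |shootCoeff c| ≤ 84 := by
  have hreg := regularSol_le_of_two_le hc
  rw [shootCoeff, abs_div, abs_of_neg (show regularSol c < 0 by linarith),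
    div_le_iff₀ (by linarith), abs_sub_comm]
  linarith [abs_singularSol_div_sqrt_three_sub_le (show 0 ≤ c by linarith)]

theorem stmt16 :
    ∃ c₅ r₄ C μ₀ : ℝ, 1 < c₅ ∧ r₄ ∈ Set.Ioo (0:ℝ) 1 ∧ 0 < C ∧ μ₀ ≠ 0 ∧
      ∀ c : ℝ, c₅ < c → ∃ w : ℝ → ℝ,
        ContDiffOn ℝ 2 w (Set.Ioi 0) ∧
        (∀ r : ℝ, 0 < r →
          deriv (deriv w) r = -(5 * (1/3 + r^2) ^ (-(2:ℝ)) * (w r + r))) ∧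
        w c = 0 ∧
        (∀ r : ℝ, 0 < r → r < r₄ → 1/2 ≤ w r / μ₀ ∧ w r / μ₀ ≤ 3/2) ∧
        (∀ r : ℝ, 0 < r → |w r| ≤ C) ∧
        (∀ r : ℝ, 0 < r →
          IntegrableOn (fun ρ => (deriv (fun σ => w σ / σ) ρ)^2 * ρ^2) (Set.Ioi r)) := by
  obtain ⟨δ, hδ, hnear⟩ :=
    exists_abs_sqrt_three_mul_radialSol_sub_one_lt 84 (ε := 1 / 2) one_half_pos
  refine ⟨2, min δ (1 / 2), 4 * 84 + 21, 1 / √3, one_lt_two,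
    ⟨lt_min hδ one_half_pos, (min_le_right _ _).trans_lt (by norm_num)⟩, by norm_num, by positivity,
    fun c hc => ⟨radialSol (shootCoeff c), (contDiff_radialSol _).contDiffOn, fun r _ => ?_, ?_,
      fun r hr hr₄ => ?_, fun r hr => abs_radialSol_le (abs_shootCoeff_le hc.le) hr.le,
      fun r hr => ?_⟩⟩
  · rw [deriv_deriv_radialSol, five_mul_rpow_neg_two_eq]
  · exact radialSol_shootCoeff_self ((regularSol_le_of_two_le hc.le).trans_lt (by norm_num)).ne
  · have h := abs_lt.1 <| hnear _ r (abs_shootCoeff_le hc.le)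
      ((abs_of_pos hr).trans_lt (hr₄.trans_le (min_le_left _ _)))
    rw [div_div_eq_mul_div, div_one, mul_comm]
    constructor <;> linarith
  · exact integrableOn_sq_deriv_div_id_mul_sq hr
      (fun ρ _ => (hasDerivAt_radialSol _ ρ).differentiableAt)
      (fun ρ hρ => abs_deriv_radialSol_mul_sub_le (hr.trans hρ).le)
end
end

section
/- There is an absolute constant C > 0 such that for every measurable function φ : ℝ³ → ℝ with |φ(x)| ≤ |x|^(−1) for all x ≠ 0, every λ > 0 and all real numbers 0 ≤ r₁ < r₂ ≤ λ, one has ‖χ_{Ω_{r₁,r₂}} W_λ⁴·φ‖_{L¹L²} ≤ C · λ^(−1) · (r₂ − r₁)^(1/2). -/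
/-!
On the time-`t` slice of `Ω_{r₁,r₂}` the variable `x` ranges over an annulus of width `r₂ - r₁`
on which `|x| ≥ |t|`. There `W_λ⁴ ≤ 9 / (λ² + |x|²) ≤ 9 / (λ² + t²)` and `|φ|² ≤ |x|⁻²`, while
polar coordinates give `∫_{a<|x|<b} |x|⁻² dx = 4π (b - a)`. Hence the `L²` norm on the slice is at
most `9 (λ² + t²)⁻¹ (4π (r₂ - r₁))^(1/2)`, and `∫ (λ² + t²)⁻¹ dt = π / λ`.
-/

open MeasureTheory Real Set

noncomputable section

open Metric Module

theorem integrable_inv_sq_add_sq {c : ℝ} (hc : c ≠ 0) :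
    Integrable fun t : ℝ => (c ^ 2 + t ^ 2)⁻¹ := by
  have h : ∀ t : ℝ, (c ^ 2 + t ^ 2)⁻¹ = (c ^ 2)⁻¹ * (1 + (t / c) ^ 2)⁻¹ := fun t => by
    field_simp
  simpa only [h] using (integrable_inv_one_add_sq.comp_div hc).const_mul _

theorem integral_univ_inv_sq_add_sq {c : ℝ} (hc : c ≠ 0) :
    ∫ t : ℝ, (c ^ 2 + t ^ 2)⁻¹ = π / |c| := by
  have h : ∀ t : ℝ, (c ^ 2 + t ^ 2)⁻¹ = (c ^ 2)⁻¹ * (1 + (t / c) ^ 2)⁻¹ := fun t => by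
    field_simp
  simp only [h]
  rw [integral_const_mul, Measure.integral_comp_div (fun t => (1 + t ^ 2)⁻¹),
    integral_univ_inv_one_add_sq, smul_eq_mul, ← sq_abs c]
  field_simp

theorem indicator_annulus_inv_norm_pow {E : Type*} [Norm E] {a b : ℝ} (n : ℕ) :
    ((‖·‖) ⁻¹' Ioo a b).indicator (fun x : E => (‖x‖ ^ n)⁻¹) =
      fun x => (Ioo a b).indicator (fun y => (y ^ n)⁻¹) ‖x‖ :=
  funext fun _ => indicator_comp_right (g := fun y : ℝ => (y ^ n)⁻¹) _

section Annulus

variable {E : Type*} [NormedAddCommGroup E] [NormedSpace ℝ E] [FiniteDimensional ℝ E]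
  [Nontrivial E] [MeasurableSpace E] [BorelSpace E] (μ : Measure E) [μ.IsAddHaarMeasure] {a b : ℝ}

theorem pow_smul_indicator_inv_pow (ha : 0 ≤ a) (n : ℕ) :
    (fun y : ℝ => y ^ n • (Ioo a b).indicator (fun y => (y ^ n)⁻¹) y) = (Ioo a b).indicator 1 := by
  ext y
  by_cases hy : y ∈ Ioo a b
  · simp [hy, (ha.trans_lt hy.1).ne']
  · simp [hy]

theorem integrableOn_annulus_inv_norm_pow (ha : 0 ≤ a) :
    IntegrableOn (fun x : E => (‖x‖ ^ (finrank ℝ E - 1))⁻¹) ((‖·‖) ⁻¹' Ioo a b) μ := by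
  rw [← integrable_indicator_iff (measurableSet_Ioo.preimage measurable_norm),
    indicator_annulus_inv_norm_pow, integrable_fun_norm_addHaar μ,
    pow_smul_indicator_inv_pow ha]
  exact (integrable_indicator_iff measurableSet_Ioo).2 (integrableOn_const measure_Ioo_lt_top.ne)
    |>.integrableOn

theorem integral_annulus_inv_norm_pow (ha : 0 ≤ a) (hab : a ≤ b) :
    ∫ x in (‖·‖) ⁻¹' Ioo a b, (‖x‖ ^ (finrank ℝ E - 1))⁻¹ ∂μ =
      finrank ℝ E * μ.real (ball 0 1) * (b - a) := by
  rw [← integral_indicator (measurableSet_Ioo.preimage measurable_norm),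
    indicator_annulus_inv_norm_pow, integral_fun_norm_addHaar μ,
    pow_smul_indicator_inv_pow ha, integral_indicator_one measurableSet_Ioo,
    measureReal_restrict_apply measurableSet_Ioo,
    inter_eq_left.2 (Ioo_subset_Ioi_self.trans (Ioi_subset_Ioi ha)), Real.volume_real_Ioo_of_le hab,
    nsmul_eq_mul, smul_eq_mul, mul_assoc]

theorem sqrt_integral_annulus_sq_le (hdim : finrank ℝ E = 3) (ha : 0 ≤ a) (hab : a ≤ b)
    {f : E → ℝ} {c : ℝ} (hc : 0 ≤ c) (hf : ∀ x : E, ‖x‖ ∈ Ioo a b → |f x| ≤ c * ‖x‖⁻¹) :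
    (∫ x in (‖·‖) ⁻¹' Ioo a b, f x ^ 2 ∂μ) ^ (1 / 2 : ℝ) ≤
      c * √(3 * μ.real (ball 0 1)) * √(b - a) := by
  have hmeas : MeasurableSet ((‖·‖) ⁻¹' Ioo a b : Set E) :=
    measurableSet_Ioo.preimage measurable_norm
  have hsq : ∀ x ∈ (‖·‖) ⁻¹' Ioo a b, f x ^ 2 ≤ c ^ 2 * (‖x‖ ^ (finrank ℝ E - 1))⁻¹ := by
    intro x hx
    rw [hdim, ← sq_abs, ← inv_pow, ← mul_pow]
    exact pow_le_pow_left₀ (abs_nonneg _) (hf x hx) 2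
  have hint : ∫ x in (‖·‖) ⁻¹' Ioo a b, f x ^ 2 ∂μ ≤ c ^ 2 * (3 * μ.real (ball 0 1) * (b - a)) := by
    calc ∫ x in (‖·‖) ⁻¹' Ioo a b, f x ^ 2 ∂μ
        ≤ ∫ x in (‖·‖) ⁻¹' Ioo a b, c ^ 2 * (‖x‖ ^ (finrank ℝ E - 1))⁻¹ ∂μ :=
          integral_mono_of_nonneg (.of_forall fun x => sq_nonneg _)
            ((integrableOn_annulus_inv_norm_pow μ ha).const_mul _)
            (ae_restrict_of_forall_mem hmeas hsq)
      _ = c ^ 2 * (3 * μ.real (ball 0 1) * (b - a)) := by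
          rw [integral_const_mul, integral_annulus_inv_norm_pow μ ha hab, hdim, Nat.cast_ofNat]
  rw [← sqrt_eq_rpow, mul_assoc, ← sqrt_mul (by positivity), ← sqrt_sq hc,
    ← sqrt_mul (sq_nonneg c)]
  exact sqrt_le_sqrt hint

end Annulus

theorem rpow_neg_half_pow_four {y : ℝ} (hy : 0 ≤ y) : (y ^ (-(1:ℝ)/2)) ^ 4 = (y ^ 2)⁻¹ := by
  rw [← rpow_natCast, ← rpow_mul hy, ← rpow_two, ← rpow_neg hy]
  norm_num

theorem Wlam_pow_four {lam : ℝ} (hlam : 0 < lam) (x : EuclideanSpace ℝ (Fin 3)) :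
    Wlam lam x ^ 4 = lam ^ 2 / (lam ^ 2 / 3 + ‖x‖ ^ 2) ^ 2 := by
  rw [Wlam, W3, mul_pow, rpow_neg_half_pow_four hlam.le, rpow_neg_half_pow_four (by positivity),
    norm_smul, norm_inv, norm_of_nonneg hlam.le]
  field_simp

theorem Wlam_pow_four_le {lam : ℝ} (hlam : 0 < lam) (x : EuclideanSpace ℝ (Fin 3)) :
    Wlam lam x ^ 4 ≤ 9 * (lam ^ 2 + ‖x‖ ^ 2)⁻¹ := by
  rw [Wlam_pow_four hlam, ← div_eq_mul_inv, div_le_div_iff₀ (by positivity) (by positivity)]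
  nlinarith [sq_nonneg ‖x‖, sq_nonneg lam, mul_nonneg (sq_nonneg lam) (sq_nonneg ‖x‖),
    pow_nonneg (sq_nonneg ‖x‖) 2]

theorem stmt17 :
    ∃ C : ℝ, 0 < C ∧ ∀ (φ : EuclideanSpace ℝ (Fin 3) → ℝ) (lam r₁ r₂ : ℝ),
      Measurable φ → (∀ x : EuclideanSpace ℝ (Fin 3), x ≠ 0 → |φ x| ≤ ‖x‖⁻¹) →
      0 < lam → 0 ≤ r₁ → r₁ < r₂ → r₂ ≤ lam →
      L1L2 (channel r₁ r₂) (fun x _ => (Wlam lam x)^4 * φ x)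
        ≤ C * lam⁻¹ * (r₂ - r₁) ^ ((1:ℝ)/2) := by
  set V := volume.real (ball (0 : EuclideanSpace ℝ (Fin 3)) 1)
  have hV : 0 < V :=
    ENNReal.toReal_pos (measure_ball_pos volume 0 one_pos).ne' measure_ball_lt_top.ne
  refine ⟨9 * π * √(3 * V), by positivity, ?_⟩
  intro φ lam r₁ r₂ _ hφ hlam hr₁ hr _
  have hslice : ∀ t : ℝ, (∫ x in {x | (x, t) ∈ channel r₁ r₂}, ((Wlam lam x) ^ 4 * φ x) ^ 2)
      ^ (1 / 2 : ℝ) ≤ 9 * (lam ^ 2 + t ^ 2)⁻¹ * √(3 * V) * √(r₂ - r₁) := by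
    intro t
    have hbound : ∀ x : EuclideanSpace ℝ (Fin 3), ‖x‖ ∈ Ioo (|t| + r₁) (|t| + r₂) →
        |Wlam lam x ^ 4 * φ x| ≤ 9 * (lam ^ 2 + t ^ 2)⁻¹ * ‖x‖⁻¹ := by
      intro x hx
      have htx : t ^ 2 ≤ ‖x‖ ^ 2 := sq_le_sq.2 (by rw [abs_norm]; linarith [hx.1])
      have hx0 : x ≠ 0 := norm_pos_iff.1 (by linarith [hx.1, abs_nonneg t])
      rw [abs_mul, abs_of_nonneg (by positivity)]
      refine mul_le_mul ((Wlam_pow_four_le hlam x).trans ?_) (hφ x hx0) (abs_nonneg _)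
        (by positivity)
      gcongr
    have h := sqrt_integral_annulus_sq_le volume finrank_euclideanSpace_fin (by positivity)
      (by linarith) (by positivity) hbound
    rwa [add_sub_add_left_eq_sub] at h
  calc L1L2 (channel r₁ r₂) (fun x _ => (Wlam lam x) ^ 4 * φ x)
      ≤ ∫ t : ℝ, 9 * (lam ^ 2 + t ^ 2)⁻¹ * √(3 * V) * √(r₂ - r₁) :=
        integral_mono_of_nonneg (.of_forall fun t => by positivity)
          (((integrable_inv_sq_add_sq hlam.ne').const_mul 9).mul_const _ |>.mul_const _)
          (.of_forall hslice)
    _ = 9 * π * √(3 * V) * lam⁻¹ * (r₂ - r₁) ^ ((1:ℝ)/2) := by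
        rw [integral_mul_const, integral_mul_const, integral_const_mul,
          integral_univ_inv_sq_add_sq hlam.ne', abs_of_pos hlam, ← sqrt_eq_rpow]
        ring
end
end

section
/- For every measurable G : ℝ → ℝ with ∫_ℝ G(s)² ds < ∞, one has lim_{t→+∞} sup_{r>0} r^(−1/2) · ∫_{−t}^{−t+r} |G(s)| ds = 0. -/
open MeasureTheory Real Set

noncomputable section

open Filter Topology
open scoped ENNReal

/-! Fix `n` so that `∫_{|s| > n} G²` is small. On a window `(-t, -t + r]`, the part of `|G|`
outside `[-n, n]` contributes at most `√r ‖G‖_{L²(|s| > n)}` by Cauchy–Schwarz. The window meets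
`[-n, n]` only when `r ≥ t - n`, so the part inside contributes at most `∫_{-n}^n |G| / √(t - n)`
after division by `√r`, and this tends to `0` as `t → ∞`. -/

theorem MeasureTheory.MemLp.integrableOn_abs {α : Type*} [MeasurableSpace α] {μ : Measure α}
    {f : α → ℝ} (hf : MemLp f 2 μ) {s : Set α} (hs : μ s ≠ ∞) :
    IntegrableOn (fun x => |f x|) s μ :=
  have := isFiniteMeasure_restrict.2 hs
  ((hf.restrict s).integrable one_le_two).abs

theorem integral_abs_le_sqrt_measureReal_mul_sqrt {α : Type*} [MeasurableSpace α]
    {μ : Measure α} [IsFiniteMeasure μ] {f : α → ℝ} (hf : MemLp f 2 μ) :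
    ∫ x, |f x| ∂μ ≤ √(μ.real univ) * √(∫ x, f x ^ 2 ∂μ) := by
  have h := integral_mul_le_Lp_mul_Lq_of_nonneg Real.HolderConjugate.two_two
    (Eventually.of_forall fun x => abs_nonneg (f x)) (Eventually.of_forall fun _ => zero_le_one)
    (by simpa using hf.norm) (by simpa using memLp_const (μ := μ) (p := 2) (1 : ℝ))
  simpa [sqrt_eq_rpow, mul_comm] using h

theorem tendsto_setIntegral_compl_Icc {E : Type*} [NormedAddCommGroup E] [NormedSpace ℝ E]
    {f : ℝ → E} (hf : Integrable f) :
    Tendsto (fun n : ℝ => ∫ x in (Icc (-n) n)ᶜ, f x) atTop (𝓝 0) := by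
  have h := tendsto_setIntegral_of_antitone (μ := volume) (f := f)
    (fun n => measurableSet_Icc.compl)
    (fun m n hmn => compl_subset_compl.2 (Icc_subset_Icc (neg_le_neg hmn) hmn))
    ⟨0, hf.integrableOn⟩
  have hempty : ⋂ n : ℝ, (Icc (-n) n)ᶜ = ∅ :=
    eq_empty_of_forall_notMem fun x hx => mem_iInter.1 hx |x| ⟨neg_abs_le x, le_abs_self x⟩
  simpa [hempty] using h

section

variable {G : ℝ → ℝ} {a b t r : ℝ}

theorem setIntegral_Ioc_diff_abs_le (hG : MemLp G 2 volume) (hr : 0 ≤ r) :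
    ∫ s in Ioc (-t) (-t + r) \ Icc a b, |G s| ≤ √r * √(∫ s in (Icc a b)ᶜ, G s ^ 2) := by
  set E := Ioc (-t) (-t + r) \ Icc a b
  have hE : volume E ≠ ∞ := measure_ne_top_of_subset sdiff_subset measure_Ioc_lt_top.ne
  have := isFiniteMeasure_restrict.2 hE
  calc ∫ s in E, |G s|
      ≤ √(volume.real E) * √(∫ s in E, G s ^ 2) := by
        simpa using integral_abs_le_sqrt_measureReal_mul_sqrt (hG.restrict E)
    _ ≤ √r * √(∫ s in (Icc a b)ᶜ, G s ^ 2) := by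
        gcongr
        · calc volume.real E ≤ volume.real (Ioc (-t) (-t + r)) :=
                measureReal_mono sdiff_subset measure_Ioc_lt_top.ne
            _ = r := by simp [hr]
        · exact Eventually.of_forall fun s => sq_nonneg (G s)
        · exact hG.integrable_sq.integrableOn
        · exact fun s hs => hs.2

theorem setIntegral_Ioc_inter_abs_le (hG : MemLp G 2 volume) (hta : 0 < t + a) (hr : 0 < r) :
    ∫ s in Ioc (-t) (-t + r) ∩ Icc a b, |G s| ≤ √r * ((∫ s in Icc a b, |G s|) / √(t + a)) := by
  by_cases hra : r < t + a
  · have hempty : Ioc (-t) (-t + r) ∩ Icc a b = ∅ :=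
      eq_empty_of_forall_notMem fun s ⟨hs, hs'⟩ => by linarith [hs.2, hs'.1]
    rw [hempty, setIntegral_empty]
    positivity
  · have hsqrt : 1 ≤ √r / √(t + a) :=
      (one_le_div (sqrt_pos.2 hta)).2 (sqrt_le_sqrt (not_lt.1 hra))
    calc ∫ s in Ioc (-t) (-t + r) ∩ Icc a b, |G s|
        ≤ ∫ s in Icc a b, |G s| :=
          setIntegral_mono_set (hG.integrableOn_abs measure_Icc_lt_top.ne)
            (Eventually.of_forall fun s => abs_nonneg (G s))
            (Eventually.of_forall fun s hs => hs.2)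
      _ ≤ (∫ s in Icc a b, |G s|) * (√r / √(t + a)) :=
          le_mul_of_one_le_right (by positivity) hsqrt
      _ = √r * ((∫ s in Icc a b, |G s|) / √(t + a)) := by ring

theorem intervalIntegral_abs_div_sqrt_le (hG : MemLp G 2 volume) (hta : 0 < t + a)
    (hr : 0 < r) :
    (∫ s in (-t)..(-t + r), |G s|) / √r
      ≤ √(∫ s in (Icc a b)ᶜ, G s ^ 2) + (∫ s in Icc a b, |G s|) / √(t + a) := by
  rw [div_le_iff₀' (sqrt_pos.2 hr), mul_add, intervalIntegral.integral_of_le (by linarith),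
    ← integral_inter_add_sdiff measurableSet_Icc (hG.integrableOn_abs measure_Ioc_lt_top.ne)]
  exact (add_le_add (setIntegral_Ioc_inter_abs_le hG hta hr)
    (setIntegral_Ioc_diff_abs_le hG hr.le)).trans_eq (add_comm _ _)

theorem sSup_intervalIntegral_abs_div_sqrt_le (hG : MemLp G 2 volume) (hta : 0 < t + a) :
    sSup {A : ℝ | ∃ r : ℝ, 0 < r ∧ A = (∫ s in (-t)..(-t + r), |G s|) / √r}
      ≤ √(∫ s in (Icc a b)ᶜ, G s ^ 2) + (∫ s in Icc a b, |G s|) / √(t + a) := by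
  refine Real.sSup_le ?_ (by positivity)
  rintro _ ⟨r, hr, rfl⟩
  exact intervalIntegral_abs_div_sqrt_le hG hta hr

theorem sSup_intervalIntegral_abs_div_sqrt_nonneg (G : ℝ → ℝ) (t : ℝ) :
    0 ≤ sSup {A : ℝ | ∃ r : ℝ, 0 < r ∧ A = (∫ s in (-t)..(-t + r), |G s|) / √r} := by
  refine Real.sSup_nonneg ?_
  rintro _ ⟨r, hr, rfl⟩
  exact div_nonneg (intervalIntegral.integral_nonneg (by linarith) fun s _ => abs_nonneg _)
    (sqrt_nonneg r)

end

theorem stmt19 (G : ℝ → ℝ) (hmeas : Measurable G)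
    (hG2 : Integrable (fun s => (G s)^2)) :
    Filter.Tendsto
      (fun t : ℝ =>
        sSup {A : ℝ | ∃ r : ℝ, 0 < r ∧ A = (∫ s in (-t)..(-t + r), |G s|) / Real.sqrt r})
      Filter.atTop (nhds 0) := by
  have hG : MemLp G 2 volume := (memLp_two_iff_integrable_sq hmeas.aestronglyMeasurable).2 hG2
  refine tendsto_order.2 ⟨fun c hc => Eventually.of_forall fun t =>
    hc.trans_le (sSup_intervalIntegral_abs_div_sqrt_nonneg G t), fun ε hε => ?_⟩
  have htail : Tendsto (fun n : ℝ => √(∫ s in (Icc (-n) n)ᶜ, G s ^ 2)) atTop (𝓝 0) := by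
    simpa using (tendsto_setIntegral_compl_Icc hG2).sqrt
  obtain ⟨n, hn⟩ := (htail.eventually (gt_mem_nhds (half_pos hε))).exists
  have hdecay : Tendsto (fun t => (∫ s in Icc (-n) n, |G s|) / √(t + -n)) atTop (𝓝 0) :=
    tendsto_const_nhds.div_atTop
      (tendsto_sqrt_atTop.comp (tendsto_atTop_add_const_right _ _ tendsto_id))
  filter_upwards [hdecay.eventually (gt_mem_nhds (half_pos hε)), eventually_gt_atTop n]
    with t hdecay_t hnt
  have := sSup_intervalIntegral_abs_div_sqrt_le (b := n) hG (show 0 < t + -n by linarith)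
  linarith
end
end
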